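/- arXiv:math/0408030 — 3 statements merged into one kernel-verified Lean document; each statement's English description precedes it below -/
import Mathlib

section
/- If the functional equation v_i h_k'(v_k) = − v_k h_i'(v_i) holds for all i ≠ k (1 ≤ i,k ≤ N, N ≥ 3) and all (v_1,...,v_N) on S^{N-1}, for differentiable functions h_1,...,h_N on (−1,1), then each h_j' is identically zero, i.e., each h_j is constant. -/
/-!
For `a ≠ 0` with `2a² < 1`, the unit vector with `a` at two of three distinct coordinates and
`√(1 - 2a²)` at the third turns the equation for that pair `(i,k)` into `h'_k(a) = -h'_i(a)`.
Around a triangle `j, k, l` of indices these sign changes form an odd cycle, so `h'_j(a) = 0`.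
For arbitrary `x ∈ (-1,1)` choose such a `b` with `x² + b² < 1`: a point with `v_j = x`,
`v_k = b` gives `x h'_k(b) = -b h'_j(x)`, and `h'_k(b) = 0` forces `h'_j(x) = 0`.
-/

open Set

theorem Fintype.exists_ne_ne_of_two_lt_card {α : Type*} [Fintype α] (h : 2 < Fintype.card α)
    (j : α) : ∃ k l : α, j ≠ k ∧ j ≠ l ∧ k ≠ l := by
  classical
  have : 1 < (Finset.univ.erase j).card := by
    rw [Finset.card_erase_of_mem (Finset.mem_univ j), Finset.card_univ]
    omega
  obtain ⟨k, hk, l, hl, hkl⟩ := Finset.one_lt_card.mp this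
  exact ⟨k, l, (Finset.ne_of_mem_erase hk).symm, (Finset.ne_of_mem_erase hl).symm, hkl⟩

namespace EuclideanSpace

variable {ι : Type*} [Fintype ι]

theorem abs_apply_lt_one_of_norm_eq_one {v : EuclideanSpace ℝ ι} (hv : ‖v‖ = 1) {m n : ι}
    (hmn : m ≠ n) (hn : v n ≠ 0) : |v m| < 1 := by
  have hsum : v m ^ 2 + v n ^ 2 ≤ 1 := by
    rw [← one_pow 2, ← hv, real_norm_sq_eq]
    exact Finset.add_le_sum (fun _ _ ↦ sq_nonneg _) (Finset.mem_univ m) (Finset.mem_univ n) hmn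
  have : 0 < v n ^ 2 := by positivity
  rw [← sq_lt_one_iff_abs_lt_one]
  linarith

theorem apply_mem_Ioo_of_norm_eq_one {v : EuclideanSpace ℝ ι} (hv : ‖v‖ = 1) {p q : ι}
    (hpq : p ≠ q) (hp : v p ≠ 0) (hq : v q ≠ 0) (m : ι) : v m ∈ Ioo (-1 : ℝ) 1 := by
  rw [mem_Ioo, ← abs_lt]
  obtain rfl | hmp := eq_or_ne m p
  · exact abs_apply_lt_one_of_norm_eq_one hv hpq hq
  · exact abs_apply_lt_one_of_norm_eq_one hv hmp hp

theorem exists_norm_eq_one_of_sq_add_sq_add_sq [DecidableEq ι] {i k l : ι} (hik : i ≠ k)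
    (hil : i ≠ l) (hkl : k ≠ l) {a b c : ℝ} (habc : a ^ 2 + b ^ 2 + c ^ 2 = 1) :
    ∃ v : EuclideanSpace ℝ ι, ‖v‖ = 1 ∧ v i = a ∧ v k = b ∧ v l = c := by
  set f : ι → ℝ := Pi.single i a + Pi.single k b + Pi.single l c
  have hsq : ∀ m, f m ^ 2 =
      (Pi.single i (a ^ 2) + Pi.single k (b ^ 2) + Pi.single l (c ^ 2) : ι → ℝ) m := by
    intro m
    by_cases hi : m = i <;> by_cases hk : m = k <;> by_cases hl : m = l <;> simp_all [f]
  refine ⟨WithLp.toLp 2 f, ?_, by simp [f, hik.symm, hil.symm], by simp [f, hik, hkl.symm],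
    by simp [f, hil, hkl]⟩
  rw [← pow_eq_one_iff_of_nonneg (norm_nonneg _) two_ne_zero, real_norm_sq_eq]
  simp only [hsq, Pi.add_apply, Finset.sum_add_distrib, Fintype.sum_pi_single', habc]

end EuclideanSpace

def SphereFunctionalEquation {N : ℕ} (g : Fin N → ℝ → ℝ) : Prop :=
  ∀ i k : Fin N, i ≠ k → ∀ v : EuclideanSpace ℝ (Fin N), ‖v‖ = 1 →
    (∀ j, v j ∈ Ioo (-1 : ℝ) 1) → v i * g k (v k) = -(v k * g i (v i))

namespace SphereFunctionalEquation

variable {N : ℕ} {g : Fin N → ℝ → ℝ} {i j k l : Fin N}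

theorem mul_apply_eq_neg (hg : SphereFunctionalEquation g) (hik : i ≠ k) (hil : i ≠ l)
    (hkl : k ≠ l) {a b : ℝ} (hb : b ≠ 0) (hab : a ^ 2 + b ^ 2 < 1) :
    a * g k b = -(b * g i a) := by
  set c := √(1 - a ^ 2 - b ^ 2)
  have hc : 0 < c := Real.sqrt_pos.mpr (by linarith)
  have hc2 : c ^ 2 = 1 - a ^ 2 - b ^ 2 := Real.sq_sqrt (by linarith)
  obtain ⟨v, hv, hvi, hvk, hvl⟩ :=
    EuclideanSpace.exists_norm_eq_one_of_sq_add_sq_add_sq hik hil hkl (a := a) (b := b) (c := c)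
      (by linarith)
  have hmem := EuclideanSpace.apply_mem_Ioo_of_norm_eq_one hv hkl (hvk ▸ hb) (hvl ▸ hc.ne')
  simpa only [hvi, hvk] using hg i k hik v hv hmem

theorem apply_eq_zero_of_two_mul_sq_lt_one (hg : SphereFunctionalEquation g) (hjk : j ≠ k)
    (hjl : j ≠ l) (hkl : k ≠ l) {a : ℝ} (ha : a ≠ 0) (ha2 : 2 * a ^ 2 < 1) : g j a = 0 := by
  have hjk' := hg.mul_apply_eq_neg hjk hjl hkl ha (a := a) (by linarith)
  have hjl' := hg.mul_apply_eq_neg hjl hjk hkl.symm ha (a := a) (by linarith)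
  have hkl' := hg.mul_apply_eq_neg hkl hjk.symm hjl.symm ha (a := a) (by linarith)
  have : a * g j a = 0 := by linarith
  exact (mul_eq_zero.mp this).resolve_left ha

end SphereFunctionalEquation

theorem functional_equation_on_sphere_forces_constants_general (N : ℕ) (hN : 3 ≤ N)
    (h' : Fin N → ℝ → ℝ)
    (heq : ∀ i k : Fin N, i ≠ k →
      ∀ v : EuclideanSpace ℝ (Fin N), ‖v‖ = 1 →
        (∀ j, v j ∈ Set.Ioo (-1 : ℝ) 1) →
        v i * h' k (v k) = - (v k * h' i (v i))) :
    ∀ j, ∀ x ∈ Set.Ioo (-1 : ℝ) 1, h' j x = 0 := by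
  intro j x hx
  obtain ⟨k, l, hjk, hjl, hkl⟩ :=
    Fintype.exists_ne_ne_of_two_lt_card (by rwa [Fintype.card_fin]) j
  have hx2 : x ^ 2 < 1 := by nlinarith [hx.1, hx.2]
  set b := √(1 - x ^ 2) / 2
  have hb : 0 < b := by positivity
  have hb2 : b ^ 2 = (1 - x ^ 2) / 4 := by
    rw [div_pow, Real.sq_sqrt (by linarith)]
    norm_num
  have hkb : h' k b = 0 :=
    SphereFunctionalEquation.apply_eq_zero_of_two_mul_sq_lt_one heq hjk.symm hkl hjl hb.ne'
      (by linarith [sq_nonneg x])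
  have hxb := SphereFunctionalEquation.mul_apply_eq_neg heq hjk hjl hkl hb.ne' (a := x)
    (by linarith)
  rw [hkb, mul_zero, zero_eq_neg] at hxb
  exact (mul_eq_zero.mp hxb).resolve_left hb.ne'

/-- if differentiable functions `h_1,…,h_N` on `(-1,1)`, `N ≥ 3`,
satisfy `v_i h_k'(v_k) = − v_k h_i'(v_i)` for all `i ≠ k` and all points of the
unit sphere (with coordinates in `(-1,1)`), then each `h_j'` vanishes identically,
i.e. each `h_j` is constant. -/
theorem functional_equation_on_sphere_forces_constants (N : ℕ) (hN : 3 ≤ N)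
    (h h' : Fin N → ℝ → ℝ)
    (hderiv : ∀ j, ∀ x ∈ Set.Ioo (-1 : ℝ) 1, HasDerivAt (h j) (h' j x) x)
    (heq : ∀ i k : Fin N, i ≠ k →
      ∀ v : EuclideanSpace ℝ (Fin N), ‖v‖ = 1 →
        (∀ j, v j ∈ Set.Ioo (-1 : ℝ) 1) →
        v i * h' k (v k) = - (v k * h' i (v i))) :
    ∀ j, ∀ x ∈ Set.Ioo (-1 : ℝ) 1, h' j x = 0 :=
  functional_equation_on_sphere_forces_constants_general N hN h' heq
end

section
/- Factorization lemma: let a_1,...,a_N span ℝ^M, S ⊊ {1,...,N} nonempty, r = dim span{a_j : j ∈ S}. Then there exist vectors b_j ∈ ℝ^r (j ∈ S ∪ S^c) and c_j ∈ ℝ^{M−r} (j ∈ S^c) such that for all nonnegative bounded compactly supported f_j: ∫_{ℝ^M} ∏_{j=1}^N f_j(a_j·x) d^M x = ∫_{ℝ^r} ∏_{j∈S} f_j(b_j·y) ( ∫_{ℝ^{M−r}} ∏_{j∈S^c} f_j(b_j·y + c_j·z) d^{M−r} z ) d^r y. -/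
/-!
Take an orthonormal basis of `ℝ^M` whose first `r` vectors span `V = span {a_j : j ∈ S}` and whose
remaining `M - r` vectors span `Vᗮ`. Coordinates `(y, z)` in this basis are a volume-preserving
change of variables in which `a_j ⬝ x = b_j ⬝ y + c_j ⬝ z`, where `b_j, c_j` are the coordinates
of `a_j`; `c_j = 0` for `j ∈ S` since `a_j ∈ V`, so Tonelli gives the iterated integral.
-/

open MeasureTheory ENNReal Module WithLp

namespace Submodule

variable {𝕜 E : Type*} [RCLike 𝕜] [NormedAddCommGroup E] [InnerProductSpace 𝕜 E]
  [FiniteDimensional 𝕜 E] (K : Submodule 𝕜 E) {r n : ℕ}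

theorem finrank_orthogonal_eq_sub (hK : finrank 𝕜 K = r) (hE : finrank 𝕜 E = n) :
    finrank 𝕜 Kᗮ = n - r := by
  have := K.finrank_add_finrank_orthogonal
  omega

noncomputable def adaptedOrthonormalBasis (hK : finrank 𝕜 K = r) (hE : finrank 𝕜 E = n) :
    OrthonormalBasis (Fin r ⊕ Fin (n - r)) 𝕜 E :=
  (((stdOrthonormalBasis 𝕜 K).reindex (finCongr hK)).prod
    ((stdOrthonormalBasis 𝕜 Kᗮ).reindex (finCongr (K.finrank_orthogonal_eq_sub hK hE)))).map
    K.orthogonalDecomposition.symm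

variable {K}

theorem adaptedOrthonormalBasis_inr_mem (hK : finrank 𝕜 K = r) (hE : finrank 𝕜 E = n)
    (k : Fin (n - r)) : K.adaptedOrthonormalBasis hK hE (.inr k) ∈ Kᗮ := by
  simp [adaptedOrthonormalBasis]

end Submodule

namespace OrthonormalBasis

variable {ι κ η : Type*} [Fintype ι] [Fintype κ] [Fintype η]
  (B : OrthonormalBasis (ι ⊕ κ) ℝ (EuclideanSpace ℝ η))

noncomputable def splitCoords (x : η → ℝ) : (ι → ℝ) × (κ → ℝ) :=
  MeasurableEquiv.sumPiEquivProdPi (fun _ => ℝ) (ofLp (B.repr (toLp 2 x)))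

theorem measurePreserving_splitCoords : MeasurePreserving B.splitCoords :=
  (volume_measurePreserving_sumPiEquivProdPi _).comp <|
    (PiLp.volume_preserving_ofLp _).comp <|
      B.measurePreserving_repr.comp (PiLp.volume_preserving_toLp _)

theorem lintegral_comp_splitCoords {F : (ι → ℝ) × (κ → ℝ) → ℝ≥0∞} (hF : Measurable F) :
    ∫⁻ x, F (B.splitCoords x) = ∫⁻ y, ∫⁻ z, F (y, z) := by
  rw [B.measurePreserving_splitCoords.lintegral_comp hF, Measure.volume_eq_prod,
    lintegral_prod _ hF.aemeasurable]

theorem dotProduct_eq_sum_inner_mul_splitCoords (v x : η → ℝ) :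
    v ⬝ᵥ x = ∑ i, inner ℝ (toLp 2 v) (B (.inl i)) * (B.splitCoords x).1 i +
      ∑ k, inner ℝ (toLp 2 v) (B (.inr k)) * (B.splitCoords x).2 k := by
  calc v ⬝ᵥ x = inner ℝ (toLp 2 v) (toLp 2 x) := by
        rw [EuclideanSpace.inner_toLp_toLp, dotProduct_comm, star_trivial]
    _ = ∑ k, inner ℝ (toLp 2 v) (B k) * inner ℝ (B k) (toLp 2 x) :=
        (B.sum_inner_mul_inner _ _).symm
    _ = _ := by simp only [Fintype.sum_sum_type, ← B.repr_apply_apply]; rfl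

theorem lintegral_prod_comp_dotProduct {ν : Type*} [Fintype ν] (a : ν → η → ℝ)
    {g : ν → ℝ → ℝ≥0∞} (hg : ∀ j, Measurable (g j)) :
    ∫⁻ x, ∏ j, g j (a j ⬝ᵥ x) =
      ∫⁻ y, ∫⁻ z, ∏ j, g j ((fun i => inner ℝ (toLp 2 (a j)) (B (.inl i))) ⬝ᵥ y +
        (fun k => inner ℝ (toLp 2 (a j)) (B (.inr k))) ⬝ᵥ z) := by
  have hF : Measurable fun p : (ι → ℝ) × (κ → ℝ) =>
      ∏ j, g j ((fun i => inner ℝ (toLp 2 (a j)) (B (.inl i))) ⬝ᵥ p.1 +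
        (fun k => inner ℝ (toLp 2 (a j)) (B (.inr k))) ⬝ᵥ p.2) :=
    Finset.measurable_prod _ fun j _ => (hg j).comp (by simp only [dotProduct]; fun_prop)
  simp_rw [B.dotProduct_eq_sum_inner_mul_splitCoords]
  exact B.lintegral_comp_splitCoords hF

end OrthonormalBasis

open OrthonormalBasis Submodule in
theorem brascampLieb_factorization_general (M N : ℕ)
    (a : Fin N → Fin M → ℝ)
    (S : Finset (Fin N))
    (r : ℕ) (hr : r = Module.finrank ℝ (Submodule.span ℝ (a '' ↑S))) :
    ∃ b : Fin N → Fin r → ℝ, ∃ c : Fin N → Fin (M - r) → ℝ,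
      ∀ f : Fin N → ℝ → ℝ, (∀ j, Measurable (f j)) → (∀ j y, 0 ≤ f j y) →
        (∀ j, ∃ C, ∀ y, f j y ≤ C) → (∀ j, HasCompactSupport (f j)) →
        (∫⁻ x : Fin M → ℝ, ∏ j, ENNReal.ofReal (f j (∑ m, a j m * x m))) =
          ∫⁻ y : Fin r → ℝ,
            (∏ j ∈ S, ENNReal.ofReal (f j (∑ m, b j m * y m))) *
              ∫⁻ z : Fin (M - r) → ℝ,
                ∏ j ∈ Sᶜ, ENNReal.ofReal
                  (f j ((∑ m, b j m * y m) + ∑ m, c j m * z m)) := by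
  let K := (span ℝ (a '' S)).map (WithLp.linearEquiv 2 ℝ (Fin M → ℝ)).symm.toLinearMap
  have hK : finrank ℝ K = r := by rw [hr, LinearEquiv.finrank_map_eq]
  let B := K.adaptedOrthonormalBasis hK finrank_euclideanSpace_fin
  let b j i := inner ℝ (toLp 2 (a j)) (B (.inl i))
  let c j k := inner ℝ (toLp 2 (a j)) (B (.inr k))
  have hc : ∀ j ∈ S, c j = 0 := fun j hj => funext fun k =>
    inner_right_of_mem_orthogonal (mem_map_of_mem (subset_span (Set.mem_image_of_mem a hj)))
      (adaptedOrthonormalBasis_inr_mem hK _ k)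
  refine ⟨b, c, fun f hf _ _ _ => ?_⟩
  have hg : ∀ j, Measurable fun t => ENNReal.ofReal (f j t) := fun j => (hf j).ennreal_ofReal
  refine (B.lintegral_prod_comp_dotProduct a hg).trans (lintegral_congr fun y => ?_)
  have hmeas : Measurable fun z =>
      ∏ j ∈ Sᶜ, ENNReal.ofReal (f j (b j ⬝ᵥ y + c j ⬝ᵥ z)) :=
    Finset.measurable_prod _ fun j _ => (hg j).comp (by simp only [dotProduct]; fun_prop)
  refine (lintegral_congr fun z => ?_).trans (lintegral_const_mul _ hmeas)
  refine (S.prod_mul_prod_compl _).symm.trans ?_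
  congr 1
  refine Finset.prod_congr rfl fun j hj => ?_
  change ENNReal.ofReal (f j (b j ⬝ᵥ y + c j ⬝ᵥ z)) = _
  rw [hc j hj, zero_dotProduct, add_zero]
  rfl

/-- factorization lemma: the integral `∫ ∏_j f_j(a_j·x) dx` over
`ℝ^M` factors through the span of `{a_j : j ∈ S}` (of dimension `r`) and its
orthogonal complement. -/
theorem brascampLieb_factorization (M N : ℕ)
    (a : Fin N → Fin M → ℝ)
    (hspan : Submodule.span ℝ (Set.range a) = ⊤)
    (S : Finset (Fin N)) (hS1 : S.Nonempty) (hS2 : S ≠ Finset.univ)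
    (r : ℕ) (hr : r = Module.finrank ℝ (Submodule.span ℝ (a '' ↑S))) :
    ∃ b : Fin N → Fin r → ℝ, ∃ c : Fin N → Fin (M - r) → ℝ,
      ∀ f : Fin N → ℝ → ℝ, (∀ j, Measurable (f j)) → (∀ j y, 0 ≤ f j y) →
        (∀ j, ∃ C, ∀ y, f j y ≤ C) → (∀ j, HasCompactSupport (f j)) →
        (∫⁻ x : Fin M → ℝ, ∏ j, ENNReal.ofReal (f j (∑ m, a j m * x m))) =
          ∫⁻ y : Fin r → ℝ,
            (∏ j ∈ S, ENNReal.ofReal (f j (∑ m, b j m * y m))) *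
              ∫⁻ z : Fin (M - r) → ℝ,
                ∏ j ∈ Sᶜ, ENNReal.ofReal
                  (f j ((∑ m, b j m * y m) + ∑ m, c j m * z m)) :=
  brascampLieb_factorization_general M N a S r hr
end

section
/- Vertex characterization: the polytope K_A = { z ∈ [0,1]^N : ∑_j z_j = M, ∑_{j∈S} z_j ≤ dim span{a_j : j∈S} ∀S } equals the convex hull of the 0-1 vectors z such that {a_j : z_j = 1} is a basis of ℝ^M. -/
/-!
`K_A` is compact, convex and contains every basis indicator, so by Krein–Milman it suffices to
show that its extreme points are 0-1 vectors; a 0-1 point of `K_A` indexes a basis, since its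
support has `M` elements and spans a space of dimension at least `M`.

Call `S` tight for `z` if `∑_{j ∈ S} z_j = rank S`. As `∑ z = M ≥ rank univ`, the whole index set
is tight, and submodularity of the rank makes tight sets closed under intersection. If `z` has a
fractional coordinate, take a minimal tight set `T` containing one, `j`. Ranks are integers, so
`T` contains a second fractional coordinate `k`, and by minimality every tight set contains both
`j` and `k` or neither. Hence `z ± ε (e_j - e_k)` lie in `K_A` for small `ε`, and `z` is not
extreme.
-/

open Finset Module Submodule Filter Topology

section Tight

variable {ι : Type*} {f : Finset ι → ℕ} {z : ι → ℝ}

def IsTight (f : Finset ι → ℕ) (z : ι → ℝ) (S : Finset ι) : Prop :=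
  ∑ i ∈ S, z i = f S

theorem IsTight.inter [DecidableEq ι] (hf : ∀ S T, f (S ∪ T) + f (S ∩ T) ≤ f S + f T)
    (hz : ∀ S, ∑ i ∈ S, z i ≤ f S) {S T : Finset ι} (hS : IsTight f z S) (hT : IsTight f z T) :
    IsTight f z (S ∩ T) := by
  have hfST : (f (S ∪ T) : ℝ) + f (S ∩ T) ≤ f S + f T := by exact_mod_cast hf S T
  have := sum_union_inter (s₁ := S) (s₂ := T) (f := z)
  unfold IsTight at *
  linarith [hz (S ∪ T), hz (S ∩ T)]

theorem IsTight.exists_ne_mem_Ioo (hz : ∀ i, z i ∈ Set.Icc 0 1) {T : Finset ι}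
    (hT : IsTight f z T) {j : ι} (hjT : j ∈ T) (hj : z j ∈ Set.Ioo 0 1) :
    ∃ k ∈ T, k ≠ j ∧ z k ∈ Set.Ioo 0 1 := by
  classical
  by_contra! h
  have hint : ∑ i ∈ T.erase j, z i = #{i ∈ T.erase j | z i = 1} := by
    rw [← sum_boole]
    refine sum_congr rfl fun i hi => ?_
    obtain ⟨hij, hiT⟩ := mem_erase.1 hi
    have : z i = 0 ∨ z i = 1 := by
      by_contra! h01
      exact h i hiT hij ⟨(hz i).1.lt_of_ne' h01.1, (hz i).2.lt_of_ne h01.2⟩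
    rcases this with h0 | h1 <;> simp [*]
  have hsplit : (#{i ∈ T.erase j | z i = 1} : ℝ) + z j = f T := by
    rw [← hint, sum_erase_add _ _ hjT]; exact hT
  have h₁ : (#{i ∈ T.erase j | z i = 1} : ℝ) < f T := by linarith [hj.1]
  have h₂ : (f T : ℝ) < #{i ∈ T.erase j | z i = 1} + 1 := by linarith [hj.2]
  norm_cast at h₁ h₂
  omega

theorem exists_fractional_pair_inseparable_by_tight_sets [DecidableEq ι]
    (hf : ∀ S T, f (S ∪ T) + f (S ∩ T) ≤ f S + f T) (h01 : ∀ i, z i ∈ Set.Icc 0 1)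
    (hz : ∀ S, ∑ i ∈ S, z i ≤ f S) {U : Finset ι} (hU : IsTight f z U) {j₀ : ι} (hj₀U : j₀ ∈ U)
    (hj₀ : z j₀ ∈ Set.Ioo 0 1) :
    ∃ j k, j ≠ k ∧ z j ∈ Set.Ioo 0 1 ∧ z k ∈ Set.Ioo 0 1 ∧
      ∀ S, IsTight f z S → (j ∈ S ↔ k ∈ S) := by
  obtain ⟨T, ⟨hT, j, hjT, hj⟩, hmin⟩ := exists_minimal_of_wellFoundedLT
    (fun T => IsTight f z T ∧ ∃ j ∈ T, z j ∈ Set.Ioo 0 1) ⟨U, hU, j₀, hj₀U, hj₀⟩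
  obtain ⟨k, hkT, hkj, hk⟩ := hT.exists_ne_mem_Ioo h01 hjT hj
  have hsub : ∀ S, IsTight f z S → ∀ i ∈ T, z i ∈ Set.Ioo 0 1 → i ∈ S → T ⊆ S :=
    fun S hS i hiT hi hiS =>
      (hmin ⟨hT.inter hf hz hS, i, mem_inter.2 ⟨hiT, hiS⟩, hi⟩ inter_subset_left).trans
        inter_subset_right
  exact ⟨j, k, hkj.symm, hj, hk, fun S hS =>
    ⟨fun hjS => hsub S hS j hjT hj hjS hkT, fun hkS => hsub S hS k hkT hk hkS hjT⟩⟩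

end Tight

theorem notMem_extremePoints_of_eventually_add_smul_mem {E : Type*} [AddCommGroup E]
    [Module ℝ E] {s : Set E} {x d : E} (hd : d ≠ 0) (h : ∀ᶠ t in 𝓝 (0 : ℝ), x + t • d ∈ s) :
    x ∉ s.extremePoints ℝ := by
  intro hx
  obtain ⟨ε, hε, hball⟩ := Metric.eventually_nhds_iff.1 h
  have hε₁ : dist (ε / 2) 0 < ε := by simp [abs_of_pos hε]; linarith
  have hε₂ : dist (-(ε / 2)) 0 < ε := by simp [abs_of_pos hε]; linarith
  have hseg : x ∈ openSegment ℝ (x + (ε / 2) • d) (x + (-(ε / 2)) • d) :=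
    ⟨1 / 2, 1 / 2, by norm_num, by norm_num, by norm_num, by module⟩
  have := hx.2 (hball hε₁) (hball hε₂) hseg
  rw [add_eq_left, smul_eq_zero] at this
  exact this.elim (by positivity) hd

theorem eventually_add_mul_mem {a b : ℝ} {s : Set ℝ} (hs : s ∈ 𝓝 a) :
    ∀ᶠ t in 𝓝 (0 : ℝ), a + t * b ∈ s :=
  (Continuous.tendsto' (f := fun t : ℝ => a + t * b) (by fun_prop) 0 a (by simp)).eventually_mem hs

section BasePolytope

variable {ι : Type*} [Fintype ι] {f : Finset ι → ℕ} {r : ℕ} {z : ι → ℝ}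

/-- The polytope `K_A` of the paper, with an arbitrary set function `f` in place of the rank
function of `a`. -/
def basePolytope (f : Finset ι → ℕ) (r : ℕ) : Set (ι → ℝ) :=
  {z | (∀ j, z j ∈ Set.Icc (0 : ℝ) 1) ∧ ∑ j, z j = (r : ℝ) ∧
    ∀ S : Finset ι, ∑ j ∈ S, z j ≤ (f S : ℝ)}

theorem convex_basePolytope : Convex ℝ (basePolytope f r) := by
  rintro x ⟨hx01, hx, hxS⟩ y ⟨hy01, hy, hyS⟩ a b ha hb hab
  have hsum (S : Finset ι) :
      ∑ j ∈ S, (a • x + b • y) j = a * ∑ j ∈ S, x j + b * ∑ j ∈ S, y j := by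
    simp [sum_add_distrib, mul_sum]
  refine ⟨fun j => convex_Icc (0 : ℝ) 1 (hx01 j) (hy01 j) ha hb hab, ?_, fun S => ?_⟩
  · rw [hsum, hx, hy, ← add_mul, hab, one_mul]
  · calc ∑ j ∈ S, (a • x + b • y) j = a * ∑ j ∈ S, x j + b * ∑ j ∈ S, y j := hsum S
      _ ≤ a * f S + b * f S := by gcongr; exacts [hxS S, hyS S]
      _ = f S := by rw [← add_mul, hab, one_mul]

theorem isCompact_basePolytope : IsCompact (basePolytope f r) := by
  have hclosed : IsClosed (basePolytope f r) := by
    have : basePolytope f r = (⋂ j, (fun z : ι → ℝ => z j) ⁻¹' Set.Icc 0 1) ∩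
        ({z | ∑ j, z j = r} ∩ ⋂ S : Finset ι, {z | ∑ j ∈ S, z j ≤ f S}) := by
      ext z; simp [basePolytope]
    rw [this]
    exact (isClosed_iInter fun j => isClosed_Icc.preimage (continuous_apply j)).inter
      ((isClosed_eq (by fun_prop) continuous_const).inter
        (isClosed_iInter fun S => isClosed_le (by fun_prop) continuous_const))
  exact (isCompact_univ_pi fun _ => isCompact_Icc).of_isClosed_subset hclosed
    fun z hz j _ => hz.1 j

theorem eventually_mem_basePolytope [DecidableEq ι] (hz : z ∈ basePolytope f r) {j k : ι}
    (hjk : j ≠ k) (hj : z j ∈ Set.Ioo 0 1) (hk : z k ∈ Set.Ioo 0 1)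
    (htight : ∀ S, IsTight f z S → (j ∈ S ↔ k ∈ S)) :
    ∀ᶠ t in 𝓝 (0 : ℝ), z + t • (Pi.single j 1 - Pi.single k 1) ∈ basePolytope f r := by
  obtain ⟨h01, hsum, hle⟩ := hz
  set d : ι → ℝ := Pi.single j 1 - Pi.single k 1
  have hd (S : Finset ι) :
      ∑ i ∈ S, d i = (if j ∈ S then 1 else 0) - (if k ∈ S then 1 else 0) := by
    simp [d, sum_sub_distrib, sum_pi_single']
  have hsum_t (S : Finset ι) (t : ℝ) :
      ∑ i ∈ S, (z + t • d) i = ∑ i ∈ S, z i + t * ∑ i ∈ S, d i := by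
    simp [sum_add_distrib, mul_sum]
  have hbox (i : ι) : ∀ᶠ t in 𝓝 (0 : ℝ), (z + t • d) i ∈ Set.Icc 0 1 := by
    by_cases hi : i = j ∨ i = k
    · have hzi : z i ∈ Set.Ioo 0 1 := by rcases hi with rfl | rfl <;> assumption
      exact (eventually_add_mul_mem (Ioo_mem_nhds hzi.1 hzi.2)).mono
        fun t ht => Set.Ioo_subset_Icc_self ht
    · push Not at hi
      simp [d, hi.1, hi.2, h01 i]
  have hS (S : Finset ι) : ∀ᶠ t in 𝓝 (0 : ℝ), ∑ i ∈ S, (z + t • d) i ≤ f S := by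
    rcases (hle S).lt_or_eq with hlt | heq
    · exact (eventually_add_mul_mem (Iio_mem_nhds hlt)).mono fun t ht => (hsum_t S t).le.trans ht.le
    · have hdS : ∑ i ∈ S, d i = 0 := by
        rw [hd, if_congr (htight S heq) rfl rfl, sub_self]
      exact Eventually.of_forall fun t => by rw [hsum_t, hdS, mul_zero, add_zero, heq]
  filter_upwards [eventually_all.2 hbox, eventually_all.2 hS] with t hbox hS
  refine ⟨hbox, ?_, hS⟩
  rw [hsum_t, hd univ, hsum]
  simp

theorem zero_or_one_of_mem_extremePoints_basePolytope [DecidableEq ι]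
    (hf : ∀ S T, f (S ∪ T) + f (S ∩ T) ≤ f S + f T) (hr : f univ ≤ r)
    (hz : z ∈ (basePolytope f r).extremePoints ℝ) (i : ι) : z i = 0 ∨ z i = 1 := by
  obtain ⟨h01, hsum, hle⟩ := hz.1
  by_contra! hi
  have huniv : IsTight f z univ := le_antisymm (hle univ) (by rw [hsum]; exact_mod_cast hr)
  obtain ⟨j, k, hjk, hj, hk, htight⟩ := exists_fractional_pair_inseparable_by_tight_sets hf h01 hle
    huniv (mem_univ i) ⟨(h01 i).1.lt_of_ne' hi.1, (h01 i).2.lt_of_ne hi.2⟩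
  refine notMem_extremePoints_of_eventually_add_smul_mem ?_
    (eventually_mem_basePolytope hz.1 hjk hj hk htight) hz
  intro h
  simpa [hjk] using congr_fun h j

end BasePolytope

section SpanRank

variable {K V ι : Type*} [DivisionRing K] [AddCommGroup V] [Module K V] [FiniteDimensional K V]
  (a : ι → V)

theorem finrank_span_image_union_add_inter_le [DecidableEq ι] (S T : Finset ι) :
    finrank K (span K (a '' ↑(S ∪ T))) + finrank K (span K (a '' ↑(S ∩ T))) ≤
      finrank K (span K (a '' ↑S)) + finrank K (span K (a '' ↑T)) := by
  have hinter : span K (a '' ↑(S ∩ T)) ≤ span K (a '' ↑S) ⊓ span K (a '' ↑T) :=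
    le_inf (span_mono (Set.image_mono (by simp))) (span_mono (Set.image_mono (by simp)))
  rw [coe_union, Set.image_union, span_union,
    ← finrank_sup_add_finrank_inf_eq (span K (a '' ↑S)) (span K (a '' ↑T))]
  exact add_le_add le_rfl (finrank_mono hinter)

theorem LinearIndependent.card_inter_le_finrank_span [DecidableEq ι] {s : Finset ι}
    (hs : LinearIndependent K (fun j : s => a j)) (S : Finset ι) :
    #(S ∩ s) ≤ finrank K (span K (a '' ↑S)) := by
  have hST : LinearIndependent K (fun j : ↥(S ∩ s) => a j) :=
    hs.comp (fun j : ↥(S ∩ s) => ⟨j, (mem_inter.1 j.2).2⟩)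
      fun i j h => Subtype.ext (congrArg Subtype.val h :)
  have hrange : Set.range (fun j : ↥(S ∩ s) => a j) = a '' ↑(S ∩ s) :=
    (Set.image_eq_range a _).symm
  calc #(S ∩ s) = finrank K (span K (a '' ↑(S ∩ s))) := by
        rw [← hrange, finrank_span_eq_card hST, Fintype.card_coe]
    _ ≤ finrank K (span K (a '' ↑S)) := finrank_mono (span_mono (Set.image_mono (by simp)))

theorem linearIndependent_and_span_eq_top_of_card_le_finrank_span {s : Finset ι}
    (hcard : #s = finrank K V) (hrank : #s ≤ finrank K (span K (a '' ↑s))) :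
    LinearIndependent K (fun j : s => a j) ∧ span K (a '' ↑s) = ⊤ := by
  have hspan : span K (a '' ↑s) = ⊤ :=
    eq_top_of_finrank_eq (le_antisymm (finrank_le _) (hcard ▸ hrank))
  have hrange : Set.range (fun j : s => a j) = a '' ↑s := (Set.image_eq_range a _).symm
  refine ⟨linearIndependent_of_top_le_span_of_card_eq_finrank ?_ (by simpa using hcard), hspan⟩
  rw [hrange, hspan]

end SpanRank

theorem sum_ite_mem_one_zero {ι : Type*} [DecidableEq ι] (S s : Finset ι) :
    ∑ j ∈ S, (if j ∈ s then 1 else 0 : ℝ) = #(S ∩ s) := by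
  rw [sum_boole, filter_mem_eq_inter]

section BasisIndicators

variable {ι V : Type*} [Fintype ι] [DecidableEq ι] [AddCommGroup V] [Module ℝ V] (a : ι → V)

def basisIndicators : Set (ι → ℝ) :=
  {z | ∃ s : Finset ι, (∀ j, z j = if j ∈ s then 1 else 0) ∧
    LinearIndependent ℝ (fun j : s => a j) ∧ span ℝ (a '' ↑s) = ⊤}

theorem finite_basisIndicators : (basisIndicators a).Finite :=
  (Set.finite_range fun s : Finset ι => fun j => if j ∈ s then (1 : ℝ) else 0).subset
    fun _ ⟨s, hz, _⟩ => ⟨s, funext fun j => (hz j).symm⟩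

theorem basisIndicators_subset_basePolytope [FiniteDimensional ℝ V] :
    basisIndicators a ⊆ basePolytope (fun S => finrank ℝ (span ℝ (a '' ↑S))) (finrank ℝ V) := by
  rintro z ⟨s, hz, hli, hspan⟩
  obtain rfl : z = fun j => if j ∈ s then 1 else 0 := funext hz
  have hcard : #s = finrank ℝ V := by
    have hrange : Set.range (fun j : s => a j) = a '' ↑s := (Set.image_eq_range a _).symm
    rw [← finrank_top ℝ V, ← hspan, ← hrange, finrank_span_eq_card hli, Fintype.card_coe]
  refine ⟨fun j => by by_cases j ∈ s <;> simp [*], ?_, fun S => ?_⟩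
  · rw [sum_ite_mem_one_zero, univ_inter, hcard]
  · rw [sum_ite_mem_one_zero]
    exact_mod_cast hli.card_inter_le_finrank_span a S

theorem mem_basisIndicators_of_zero_or_one [FiniteDimensional ℝ V] {z : ι → ℝ}
    (hz : z ∈ basePolytope (fun S => finrank ℝ (span ℝ (a '' ↑S))) (finrank ℝ V))
    (h01 : ∀ j, z j = 0 ∨ z j = 1) : z ∈ basisIndicators a := by
  obtain ⟨-, hsum, hle⟩ := hz
  set s := univ.filter (z · = 1)
  have hzs (j : ι) : z j = if j ∈ s then 1 else 0 := by
    rcases h01 j with h | h <;> simp [s, h]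
  have hsum_s (S : Finset ι) : ∑ j ∈ S, z j = #(S ∩ s) := by
    simp_rw [hzs]; exact sum_ite_mem_one_zero S s
  have hcard : #s = finrank ℝ V := by
    have := hsum_s univ
    rw [univ_inter, hsum] at this
    exact_mod_cast this.symm
  have hrank : #s ≤ finrank ℝ (span ℝ (a '' ↑s)) := by
    have := hle s
    rw [hsum_s, inter_self] at this
    exact_mod_cast this
  exact ⟨s, hzs, linearIndependent_and_span_eq_top_of_card_le_finrank_span a hcard hrank⟩

theorem basePolytope_finrank_span_eq_convexHull_basisIndicators [FiniteDimensional ℝ V] :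
    basePolytope (fun S => finrank ℝ (span ℝ (a '' ↑S))) (finrank ℝ V) =
      convexHull ℝ (basisIndicators a) := by
  set P := basePolytope (fun S : Finset ι => finrank ℝ (span ℝ (a '' ↑S))) (finrank ℝ V)
  have hP : IsCompact P := isCompact_basePolytope
  have hconv : Convex ℝ P := convex_basePolytope
  have hext : P.extremePoints ℝ ⊆ basisIndicators a := fun z hz =>
    mem_basisIndicators_of_zero_or_one a hz.1 <| zero_or_one_of_mem_extremePoints_basePolytope
      (finrank_span_image_union_add_inter_le a) (finrank_le _) hz
  refine (convexHull_min (basisIndicators_subset_basePolytope a) hconv).antisymm' ?_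
  calc P = closure (convexHull ℝ (P.extremePoints ℝ)) :=
        (closure_convexHull_extremePoints hP hconv).symm
    _ ⊆ closure (convexHull ℝ (basisIndicators a)) := closure_mono (convexHull_mono hext)
    _ = convexHull ℝ (basisIndicators a) :=
        ((finite_basisIndicators a).isClosed_convexHull ℝ).closure_eq

end BasisIndicators

theorem KA_eq_convexHull_of_basis_indicators_general (M N : ℕ)
    (a : Fin N → Fin M → ℝ) :
    {z : Fin N → ℝ | (∀ j, z j ∈ Set.Icc (0 : ℝ) 1) ∧ (∑ j, z j) = (M : ℝ) ∧
        ∀ S : Finset (Fin N), (∑ j ∈ S, z j) ≤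
          (Module.finrank ℝ (Submodule.span ℝ (a '' ↑S)) : ℝ)} =
      convexHull ℝ
        {z : Fin N → ℝ | ∃ s : Finset (Fin N),
          (∀ j, z j = if j ∈ s then 1 else 0) ∧
          LinearIndependent ℝ (fun j : s => a j) ∧
          Submodule.span ℝ (a '' ↑s) = ⊤} := by
  have h := basePolytope_finrank_span_eq_convexHull_basisIndicators a
  rwa [finrank_fin_fun] at h

/-- vertex characterization: the polytope
`K_A = {z ∈ [0,1]^N : ∑ z_j = M, ∑_{j∈S} z_j ≤ dim span{a_j : j∈S} ∀S}` equals
the convex hull of the 0-1 vectors whose supports index bases of `ℝ^M`. -/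
theorem KA_eq_convexHull_of_basis_indicators (M N : ℕ)
    (a : Fin N → Fin M → ℝ)
    (hspan : Submodule.span ℝ (Set.range a) = ⊤) :
    {z : Fin N → ℝ | (∀ j, z j ∈ Set.Icc (0 : ℝ) 1) ∧ (∑ j, z j) = (M : ℝ) ∧
        ∀ S : Finset (Fin N), (∑ j ∈ S, z j) ≤
          (Module.finrank ℝ (Submodule.span ℝ (a '' ↑S)) : ℝ)} =
      convexHull ℝ
        {z : Fin N → ℝ | ∃ s : Finset (Fin N),
          (∀ j, z j = if j ∈ s then 1 else 0) ∧
          LinearIndependent ℝ (fun j : s => a j) ∧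
          Submodule.span ℝ (a '' ↑s) = ⊤} :=
  KA_eq_convexHull_of_basis_indicators_general M N a
end
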